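/- Let W ⊆ C^ω be a winning condition, M a skeleton, and suppose W is M-prefix-independent and M-cycle-consistent. Let γ, γ₁, γ₂, γ' be cycles of M with γ = γ₁γ₂ (γ₁ a cycle on some state m appearing in γ, γ₂ the remaining cycle on m). If γ and γ₁ have different values (one winning, one losing as cycles on m), then γ₁ and γ are competing and γ₁ ◁ γ, i.e., the combined cycle γ₁γ has the same value as γ. -/

import Mathlib

/-- Concatenation of a finite word with an infinite word. -/
def app {C : Type*} : List C → (ℕ → C) → (ℕ → C)
  | [], w' => w'
  | c :: u, w' => fun i =>
    match i with
    | 0 => c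
    | j + 1 => app u w' j

/-- Extension of the update function of a skeleton to finite words. -/
def updStar {C M : Type*} (upd : M → C → M) (m : M) (w : List C) : M :=
  w.foldl upd m

/-- The infinite word `γ^ω` obtained by repeating a (nonempty) finite word forever. -/
def periodic {C : Type*} [Inhabited C] (γ : List C) : ℕ → C :=
  fun i => γ.getD (i % γ.length) default

/-- The infinite word obtained by concatenating the (nonempty) finite words
`ws 0, ws 1, ws 2, …`. -/
def concatSeq {C : Type*} [Inhabited C] (ws : ℕ → List C) : ℕ → C :=
  fun i => (((List.range (i + 1)).map ws).flatten).getD i default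

/-- `W` is `M`-prefix-independent: any two finite words reaching the same state of the
skeleton from the initial state have the same winning continuations. -/
def PrefIndep {C M : Type*} (upd : M → C → M) (init : M) (W : Set (ℕ → C)) : Prop :=
  ∀ w₁ w₂ : List C, updStar upd init w₁ = updStar upd init w₂ →
    ∀ w' : ℕ → C, (app w₁ w' ∈ W ↔ app w₂ w' ∈ W)

/-- `W` is `M`-cycle-consistent: after any finite word `w`, any infinite concatenation of
winning (resp. losing) cycles on the state reached by `w` yields a winning (resp. losing)
continuation of `w`. -/
def CycleConsistent {C M : Type*} [Inhabited C] (upd : M → C → M) (init : M)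
    (W : Set (ℕ → C)) : Prop :=
  ∀ w : List C, ∀ ws : ℕ → List C,
    (∀ k, ws k ≠ [] ∧ updStar upd (updStar upd init w) (ws k) = updStar upd init w) →
    ((∀ k, app w (periodic (ws k)) ∈ W) → app w (concatSeq ws) ∈ W) ∧
    ((∀ k, app w (periodic (ws k)) ∉ W) → app w (concatSeq ws) ∉ W)


/-!
Rotating a cycle does not change its value (prefix independence), and the product of two
cycles of equal value has that value (cycle consistency applied to `u, v, u, v, …`). By
induction, `xⁿyⁿ` therefore has the value of `xy` for every `n ≥ 1`; with `a = γ₁`, `b = γ₂`,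
every `aⁿbⁿ` has the value of `ab` and every `a²ⁿbⁿ` that of `aab`. If these two values
differed, the word `a b a² b² a⁴ b⁴ ⋯` would be the concatenation of the cycles
`a^(2^k) b^(2^k)`, all of one value, and, after the prefix `a`, the concatenation of the cycles
`b^(2^k) a^(2^(k+1))`, all of the other value; cycle consistency would make it both winning
and losing.
-/

section Words

variable {C : Type*}

theorem app_append (u v : List C) (y : ℕ → C) : app (u ++ v) y = app u (app v y) := by
  induction u with
  | nil => rfl
  | cons c u ih =>
    funext i
    cases i with
    | zero => rfl
    | succ j => exact congrFun ih j

def wordPow (u : List C) (n : ℕ) : List C := (List.replicate n u).flatten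

theorem wordPow_succ (u : List C) (n : ℕ) : wordPow u (n + 1) = u ++ wordPow u n := by
  simp [wordPow, List.replicate_succ]

theorem wordPow_succ' (u : List C) (n : ℕ) : wordPow u (n + 1) = wordPow u n ++ u := by
  simp [wordPow, List.replicate_succ']

theorem wordPow_one (u : List C) : wordPow u 1 = u := by
  simp [wordPow]

theorem wordPow_append_self (u : List C) (n : ℕ) : wordPow (u ++ u) n = wordPow u (2 * n) := by
  induction n with
  | zero => rfl
  | succ n ih => rw [wordPow_succ, ih, Nat.mul_succ, wordPow_succ, wordPow_succ, List.append_assoc]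

theorem wordPow_ne_nil {u : List C} (hu : u ≠ []) {n : ℕ} (hn : n ≠ 0) : wordPow u n ≠ [] := by
  obtain ⟨n, rfl⟩ := Nat.exists_eq_succ_of_ne_zero hn
  simp [wordPow_succ, hu]

theorem List.IsPrefix.getD_eq {l l' : List C} (h : l <+: l') {i : ℕ} (hi : i < l.length)
    (d : C) : l.getD i d = l'.getD i d := by
  obtain ⟨t, rfl⟩ := h
  exact (List.getD_append _ _ _ _ hi).symm

theorem flatten_map_range_prefix (ws : ℕ → List C) {m n : ℕ} (h : m ≤ n) :
    ((List.range m).map ws).flatten <+: ((List.range n).map ws).flatten := by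
  have hrange : List.range m <+: List.range n := by
    simpa [List.take_range, h] using List.take_prefix m (List.range n)
  exact (hrange.map ws).flatten

theorem le_length_flatten_map_range {ws : ℕ → List C} (hne : ∀ k, ws k ≠ []) (n : ℕ) :
    n ≤ ((List.range n).map ws).flatten.length := by
  induction n with
  | zero => simp
  | succ n ih =>
    have := List.length_pos_iff.mpr (hne n)
    simp only [List.range_succ, List.map_append, List.map_cons, List.map_nil,
      List.flatten_append, List.flatten_cons, List.flatten_nil, List.append_nil,
      List.length_append]
    omega

variable [Inhabited C]

theorem app_apply (u : List C) (y : ℕ → C) (i : ℕ) :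
    app u y i = if i < u.length then u.getD i default else y (i - u.length) := by
  induction u generalizing i with
  | nil => simp [app]
  | cons c u ih =>
    cases i with
    | zero => simp [app]
    | succ j =>
      show app u y j = _
      rw [ih]
      by_cases h : j < u.length
      · simp [h]
      · simp [h, Nat.succ_sub_succ]

theorem eq_of_forall_eq_app_succ {ws : ℕ → List C} (hne : ∀ k, ws k ≠ [])
    {f g : ℕ → ℕ → C} (hf : ∀ k, f k = app (ws k) (f (k + 1)))
    (hg : ∀ k, g k = app (ws k) (g (k + 1))) : f = g := by
  suffices h : ∀ i k, f k i = g k i from funext fun k => funext fun i => h i k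
  intro i
  induction i using Nat.strong_induction_on with
  | _ i ih =>
    intro k
    rw [hf, hg, app_apply, app_apply]
    split_ifs with hi
    · rfl
    · exact ih _ (by have := List.length_pos_iff.mpr (hne k); omega) _

theorem periodic_eq_app_periodic (γ : List C) : periodic γ = app γ (periodic γ) := by
  funext i
  rw [app_apply]
  split_ifs with hi
  · simp [periodic, Nat.mod_eq_of_lt hi]
  · simp only [periodic]
    rw [Nat.mod_eq_sub_mod (not_lt.mp hi)]

theorem eq_periodic_of_eq_app {γ : List C} (hγ : γ ≠ []) {x : ℕ → C} (hx : x = app γ x) :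
    x = periodic γ :=
  congrFun (eq_of_forall_eq_app_succ (fun _ => hγ) (f := fun _ => x)
    (g := fun _ => periodic γ) (fun _ => hx) (fun _ => periodic_eq_app_periodic γ)) 0

theorem periodic_append (u v : List C) : periodic (u ++ v) = app u (periodic (v ++ u)) := by
  by_cases huv : u ++ v = []
  · obtain ⟨rfl, rfl⟩ := List.append_eq_nil_iff.mp huv
    rfl
  · refine (eq_periodic_of_eq_app huv ?_).symm
    rw [app_append, ← app_append v u, ← periodic_eq_app_periodic]

theorem concatSeq_apply_eq_getD {ws : ℕ → List C} (hne : ∀ k, ws k ≠ []) {n i : ℕ}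
    (hi : i < ((List.range n).map ws).flatten.length) :
    concatSeq ws i = ((List.range n).map ws).flatten.getD i default := by
  have hi' : i < ((List.range (i + 1)).map ws).flatten.length :=
    Nat.lt_of_lt_of_le (Nat.lt_succ_self i) (le_length_flatten_map_range hne _)
  rw [concatSeq, (flatten_map_range_prefix ws (le_max_left _ n)).getD_eq hi',
    (flatten_map_range_prefix ws (le_max_right _ n)).getD_eq hi]

theorem concatSeq_eq_app {ws : ℕ → List C} (hne : ∀ k, ws k ≠ []) :
    concatSeq ws = app (ws 0) (concatSeq fun k => ws (k + 1)) := by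
  have hsucc : ∀ n, ((List.range (n + 1)).map ws).flatten
      = ws 0 ++ ((List.range n).map fun k => ws (k + 1)).flatten := by
    intro n
    simp [List.range_succ_eq_map, Function.comp_def]
  funext i
  rw [app_apply]
  split_ifs with hi
  · rw [concatSeq_apply_eq_getD hne (n := 1) (by simpa [hsucc 0] using hi), hsucc 0]
    exact List.getD_append _ _ _ _ hi
  · have hj := le_length_flatten_map_range (fun k => hne (k + 1)) (i - (ws 0).length + 1)
    rw [concatSeq_apply_eq_getD hne (n := i - (ws 0).length + 1 + 1)
        (by rw [hsucc, List.length_append]; omega),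
      hsucc, List.getD_append_right _ _ _ _ (not_lt.mp hi),
      concatSeq_apply_eq_getD (fun k => hne (k + 1)) (n := i - (ws 0).length + 1) (by omega)]

theorem concatSeq_add_eq_app {ws : ℕ → List C} (hne : ∀ k, ws k ≠ []) (k : ℕ) :
    concatSeq (fun j => ws (j + k)) = app (ws k) (concatSeq fun j => ws (j + (k + 1))) := by
  rw [concatSeq_eq_app fun j => hne (j + k), Nat.zero_add]
  simp only [Nat.add_right_comm _ 1 k, Nat.add_assoc]

theorem concatSeq_eq_of_eq_app {ws : ℕ → List C} (hne : ∀ k, ws k ≠ []) {f : ℕ → ℕ → C}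
    (hf : ∀ k, f k = app (ws k) (f (k + 1))) : concatSeq ws = f 0 :=
  congrFun (eq_of_forall_eq_app_succ hne (concatSeq_add_eq_app hne) hf) 0

theorem concatSeq_alternate {u v : List C} (hu : u ≠ []) (hv : v ≠ []) :
    concatSeq (fun k => if Even k then u else v) = periodic (u ++ v) := by
  refine concatSeq_eq_of_eq_app (fun k => by split_ifs <;> assumption)
    (f := fun k => if Even k then periodic (u ++ v) else periodic (v ++ u)) fun k => ?_
  by_cases hk : Even k
  · simp only [hk, Nat.even_add_one, not_true_eq_false, if_true, if_false]
    exact periodic_append u v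
  · simp only [hk, Nat.even_add_one, not_false_eq_true, if_true, if_false]
    exact periodic_append v u

theorem concatSeq_wordPow_two_pow (a b : List C) (ha : a ≠ []) :
    concatSeq (fun k => wordPow a (2 ^ k) ++ wordPow b (2 ^ k))
      = app a (concatSeq fun k => wordPow b (2 ^ k) ++ wordPow a (2 ^ (k + 1))) := by
  set Q : ℕ → List C := fun k => wordPow b (2 ^ k) ++ wordPow a (2 ^ (k + 1))
  have hQ : ∀ k, Q k ≠ [] := fun k => by simp [Q, wordPow_ne_nil ha]
  rw [concatSeq_eq_of_eq_app (fun k => by simp [wordPow_ne_nil ha])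
    (f := fun k => app (wordPow a (2 ^ k)) (concatSeq fun j => Q (j + k))) fun k => ?_]
  · simp [wordPow_one]
  · simp only [concatSeq_add_eq_app hQ k, Q, app_append]

end Words

section Skeleton

variable {C M : Type*} {upd : M → C → M}

theorem updStar_append (s : M) (u v : List C) :
    updStar upd s (u ++ v) = updStar upd (updStar upd s u) v :=
  List.foldl_append

def IsCycleOn (upd : M → C → M) (s : M) (γ : List C) : Prop :=
  γ ≠ [] ∧ updStar upd s γ = s

theorem IsCycleOn.append {s : M} {u v : List C} (hu : IsCycleOn upd s u)
    (hv : IsCycleOn upd s v) : IsCycleOn upd s (u ++ v) :=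
  ⟨by simp [hu.1], by rw [updStar_append, hu.2, hv.2]⟩

theorem IsCycleOn.wordPow {s : M} {u : List C} (hu : IsCycleOn upd s u) {n : ℕ} (hn : n ≠ 0) :
    IsCycleOn upd s (wordPow u n) := by
  refine ⟨wordPow_ne_nil hu.1 hn, ?_⟩
  clear hn
  induction n with
  | zero => rfl
  | succ n ih => rw [wordPow_succ, updStar_append, hu.2, ih]

variable {init : M} {W : Set (ℕ → C)}

theorem PrefIndep.compl (h : PrefIndep upd init W) : PrefIndep upd init Wᶜ :=
  fun w₁ w₂ hw w' => not_congr (h w₁ w₂ hw w')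

variable [Inhabited C]

theorem CycleConsistent.compl (h : CycleConsistent upd init W) :
    CycleConsistent upd init Wᶜ :=
  fun w ws hws =>
    ⟨(h w ws hws).2, fun hk hc => hc ((h w ws hws).1 fun k => not_not.mp (hk k))⟩

theorem PrefIndep.mem_periodic_append_comm (hpi : PrefIndep upd init W) {w u : List C}
    (hu : IsCycleOn upd (updStar upd init w) u) (v : List C) :
    app w (periodic (u ++ v)) ∈ W ↔ app w (periodic (v ++ u)) ∈ W := by
  rw [periodic_append, ← app_append]
  exact hpi _ _ (by rw [updStar_append, hu.2]) _

theorem CycleConsistent.mem_periodic_append_iff (hcc : CycleConsistent upd init W)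
    {w u v : List C} (hu : IsCycleOn upd (updStar upd init w) u)
    (hv : IsCycleOn upd (updStar upd init w) v)
    (huv : app w (periodic u) ∈ W ↔ app w (periodic v) ∈ W) :
    app w (periodic (u ++ v)) ∈ W ↔ app w (periodic u) ∈ W := by
  have H := hcc w (fun k => if Even k then u else v) fun k => by split_ifs <;> assumption
  rw [concatSeq_alternate hu.1 hv.1] at H
  by_cases hwin : app w (periodic u) ∈ W
  · exact iff_of_true (H.1 fun k => by split_ifs; exacts [hwin, huv.mp hwin]) hwin
  · exact iff_of_false (H.2 fun k => by split_ifs; exacts [hwin, mt huv.mpr hwin]) hwin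

theorem mem_periodic_wordPow_append_wordPow_iff (hpi : PrefIndep upd init W)
    (hcc : CycleConsistent upd init W) {w x y : List C}
    (hx : IsCycleOn upd (updStar upd init w) x) (hy : IsCycleOn upd (updStar upd init w) y)
    {n : ℕ} (hn : n ≠ 0) :
    app w (periodic (wordPow x n ++ wordPow y n)) ∈ W ↔ app w (periodic (x ++ y)) ∈ W := by
  induction n, Nat.one_le_iff_ne_zero.mpr hn using Nat.le_induction with
  | base => rw [wordPow_one, wordPow_one]
  | succ n hn ih =>
    replace ih := ih (by omega)
    have hpow := (hx.wordPow (n := n) (by omega)).append (hy.wordPow (n := n) (by omega))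
    calc _ ↔ app w (periodic ((wordPow x n ++ wordPow y n) ++ (y ++ x))) ∈ W := by
          rw [wordPow_succ, wordPow_succ', List.append_assoc, hpi.mem_periodic_append_comm hx]
          simp only [List.append_assoc]
      _ ↔ app w (periodic (x ++ y)) ∈ W :=
          (hcc.mem_periodic_append_iff hpow (hy.append hx)
            (ih.trans (hpi.mem_periodic_append_comm hx y))).trans ih

theorem mem_periodic_append_of_mem_periodic_append_append (hpi : PrefIndep upd init W)
    (hcc : CycleConsistent upd init W) {w a b : List C}
    (ha : IsCycleOn upd (updStar upd init w) a) (hb : IsCycleOn upd (updStar upd init w) b)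
    (hAAB : app w (periodic (a ++ (a ++ b))) ∈ W) : app w (periodic (a ++ b)) ∈ W := by
  by_contra hAB
  set P : ℕ → List C := fun k => wordPow a (2 ^ k) ++ wordPow b (2 ^ k)
  set Q : ℕ → List C := fun k => wordPow b (2 ^ k) ++ wordPow a (2 ^ (k + 1))
  have hwa : updStar upd init (w ++ a) = updStar upd init w := by rw [updStar_append, ha.2]
  have hP : ∀ k, IsCycleOn upd (updStar upd init w) (P k) := fun k =>
    (ha.wordPow (by positivity)).append (hb.wordPow (by positivity))
  have hQ : ∀ k, IsCycleOn upd (updStar upd init (w ++ a)) (Q k) := fun k =>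
    hwa ▸ (hb.wordPow (by positivity)).append (ha.wordPow (by positivity))
  have hP_lose : ∀ k, app w (periodic (P k)) ∉ W := fun k =>
    (mem_periodic_wordPow_append_wordPow_iff hpi hcc ha hb (by positivity)).not.mpr hAB
  have hQ_win : ∀ k, app (w ++ a) (periodic (Q k)) ∈ W := by
    intro k
    rw [hpi _ _ hwa]
    dsimp only [Q]
    rw [hpi.mem_periodic_append_comm (hb.wordPow (n := 2 ^ k) (by positivity)),
      pow_succ, mul_comm, ← wordPow_append_self,
      mem_periodic_wordPow_append_wordPow_iff hpi hcc (ha.append ha) hb (by positivity),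
      List.append_assoc]
    exact hAAB
  have hlose := (hcc w P hP).2 hP_lose
  rw [concatSeq_wordPow_two_pow a b ha.1, ← app_append] at hlose
  exact hlose ((hcc (w ++ a) Q hQ).1 hQ_win)

theorem mem_periodic_append_append_iff (hpi : PrefIndep upd init W)
    (hcc : CycleConsistent upd init W) {w a b : List C}
    (ha : IsCycleOn upd (updStar upd init w) a) (hb : IsCycleOn upd (updStar upd init w) b) :
    app w (periodic (a ++ (a ++ b))) ∈ W ↔ app w (periodic (a ++ b)) ∈ W :=
  ⟨mem_periodic_append_of_mem_periodic_append_append hpi hcc ha hb, fun hAB =>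
    not_not.mp fun hAAB =>
      mem_periodic_append_of_mem_periodic_append_append hpi.compl hcc.compl ha hb hAAB hAB⟩

end Skeleton

theorem stmt19_general {C M : Type*} [Inhabited C]
    (upd : M → C → M) (init : M) (W : Set (ℕ → C))
    (hpi : PrefIndep upd init W) (hcc : CycleConsistent upd init W)
    (m : M) (w : List C) (hw : updStar upd init w = m)
    (γ γ₁ γ₂ : List C) (h₁ne : γ₁ ≠ []) (h₂ne : γ₂ ≠ [])
    (h₁ : updStar upd m γ₁ = m) (h₂ : updStar upd m γ₂ = m)
    (hγ : γ = γ₁ ++ γ₂) :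
    (app w (periodic (γ₁ ++ γ)) ∈ W ↔ app w (periodic γ) ∈ W) := by
  subst hw hγ
  exact mem_periodic_append_append_iff hpi hcc ⟨h₁ne, h₁⟩ ⟨h₂ne, h₂⟩

/-- if `γ = γ₁γ₂` with `γ₁, γ₂` cycles on `m`, and `γ` and `γ₁` have
different values, then `γ₁` and `γ` are competing and `γ₁ ◁ γ`: the combined cycle `γ₁γ`
has the same value as `γ`. -/
theorem stmt19 {C M : Type*} [Inhabited C] [Finite M]
    (upd : M → C → M) (init : M) (W : Set (ℕ → C))
    (hpi : PrefIndep upd init W) (hcc : CycleConsistent upd init W)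
    (m : M) (w : List C) (hw : updStar upd init w = m)
    (γ γ₁ γ₂ : List C) (h₁ne : γ₁ ≠ []) (h₂ne : γ₂ ≠ [])
    (h₁ : updStar upd m γ₁ = m) (h₂ : updStar upd m γ₂ = m)
    (hγ : γ = γ₁ ++ γ₂)
    (hdiff : ¬ (app w (periodic γ₁) ∈ W ↔ app w (periodic γ) ∈ W)) :
    (app w (periodic (γ₁ ++ γ)) ∈ W ↔ app w (periodic γ) ∈ W) :=
  stmt19_general upd init W hpi hcc m w hw γ γ₁ γ₂ h₁ne h₂ne h₁ h₂ hγ
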